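/- arXiv:2107.08472 — 4 statements merged into one kernel-verified Lean document; each statement's English description precedes it below -/
import Mathlib

section
/- The cubic polynomial s(x,y) = (28/5)y^3 - (63/10)y^2 + (9/5)y - 1/10 satisfies the quadrature rule: for every polynomial q(x,y) of total degree at most 3, the integral of s·q over the triangle K with vertices (0,0), (1,0), (0,1) equals (|K|/100)·q(0,1), where |K| = 1/2 is the area of K. -/
open MeasureTheory

/-- Evaluation of a bivariate polynomial at a point of `ℝ × ℝ`. -/
noncomputable def evP (q : MvPolynomial (Fin 2) ℝ) (p : ℝ × ℝ) : ℝ :=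
  MvPolynomial.eval ![p.1, p.2] q

/-- The reference triangle with vertices (0,0), (1,0), (0,1). -/
def refT : Set (ℝ × ℝ) := {p | 0 ≤ p.1 ∧ 0 ≤ p.2 ∧ p.1 + p.2 ≤ 1}

/-- The sting function of the vertex (0,1) on the reference triangle. -/
noncomputable def sting (p : ℝ × ℝ) : ℝ :=
  28/5 * p.2^3 - 63/10 * p.2^2 + 9/5 * p.2 - 1/10

lemma ipoly (a b c0 c1 c2 c3 c4 c5 c6 c7 : ℝ) :
    ∫ y in a..b, (c0 + c1*y + c2*y^2 + c3*y^3 + c4*y^4 + c5*y^5 + c6*y^6 + c7*y^7)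
    = (c0*b + c1*b^2/2 + c2*b^3/3 + c3*b^4/4 + c4*b^5/5 + c5*b^6/6 + c6*b^7/7 + c7*b^8/8)
      - (c0*a + c1*a^2/2 + c2*a^3/3 + c3*a^4/4 + c4*a^5/5 + c5*a^6/6 + c6*a^7/7 + c7*a^8/8) := by
  have H : ∀ y : ℝ, HasDerivAt
      (fun y : ℝ => c0*y + c1*y^2/2 + c2*y^3/3 + c3*y^4/4 + c4*y^5/5 + c5*y^6/6 + c6*y^7/7 + c7*y^8/8)
      (c0 + c1*y + c2*y^2 + c3*y^3 + c4*y^4 + c5*y^5 + c6*y^6 + c7*y^7) y := by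
    intro y
    have h := (((((((((hasDerivAt_id y).const_mul c0).add
      (((hasDerivAt_pow 2 y).const_mul c1).div_const 2)).add
      (((hasDerivAt_pow 3 y).const_mul c2).div_const 3)).add
      (((hasDerivAt_pow 4 y).const_mul c3).div_const 4)).add
      (((hasDerivAt_pow 5 y).const_mul c4).div_const 5)).add
      (((hasDerivAt_pow 6 y).const_mul c5).div_const 6)).add
      (((hasDerivAt_pow 7 y).const_mul c6).div_const 7)).add
      (((hasDerivAt_pow 8 y).const_mul c7).div_const 8))
    refine h.congr_deriv ?_
    push_cast
    ring
  rw [intervalIntegral.integral_eq_sub_of_hasDerivAt (fun y _ => H y)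
    ((Continuous.intervalIntegrable (by fun_prop) a b))]

lemma dbl_0_0 :
    (∫ x in (0:ℝ)..1, ∫ y in (0:ℝ)..(1-x),
      (28/5 * y^3 - 63/10 * y^2 + 9/5 * y - 1/10) * (x^0 * y^0)) = (1/200 : ℝ) := by
  have hin : ∀ x : ℝ, (∫ y in (0:ℝ)..(1-x),
      (28/5 * y^3 - 63/10 * y^2 + 9/5 * y - 1/10) * (x^0 * y^0))
      = (1/10 : ℝ) + (-1 : ℝ)*x + (3 : ℝ)*x^2 + (-7/2 : ℝ)*x^3 + (7/5 : ℝ)*x^4 + (0 : ℝ)*x^5 + (0 : ℝ)*x^6 + (0 : ℝ)*x^7 := by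
    intro x
    rw [intervalIntegral.integral_congr
      (g := fun y => (-1/10 : ℝ)*x^0 + (9/5 : ℝ)*x^0*y + (-63/10 : ℝ)*x^0*y^2 + (28/5 : ℝ)*x^0*y^3 + (0:ℝ)*y^4 + (0:ℝ)*y^5 + (0:ℝ)*y^6 + (0:ℝ)*y^7)
      (fun y _ => by ring), ipoly]
    ring
  rw [intervalIntegral.integral_congr (g := fun x => (1/10 : ℝ) + (-1 : ℝ)*x + (3 : ℝ)*x^2 + (-7/2 : ℝ)*x^3 + (7/5 : ℝ)*x^4 + (0 : ℝ)*x^5 + (0 : ℝ)*x^6 + (0 : ℝ)*x^7) (fun x _ => hin x), ipoly]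
  norm_num

lemma dbl_0_1 :
    (∫ x in (0:ℝ)..1, ∫ y in (0:ℝ)..(1-x),
      (28/5 * y^3 - 63/10 * y^2 + 9/5 * y - 1/10) * (x^0 * y^1)) = (1/200 : ℝ) := by
  have hin : ∀ x : ℝ, (∫ y in (0:ℝ)..(1-x),
      (28/5 * y^3 - 63/10 * y^2 + 9/5 * y - 1/10) * (x^0 * y^1))
      = (19/200 : ℝ) + (-1 : ℝ)*x + (7/2 : ℝ)*x^2 + (-11/2 : ℝ)*x^3 + (161/40 : ℝ)*x^4 + (-28/25 : ℝ)*x^5 + (0 : ℝ)*x^6 + (0 : ℝ)*x^7 := by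
    intro x
    rw [intervalIntegral.integral_congr
      (g := fun y => (0:ℝ) + (-1/10 : ℝ)*x^0*y + (9/5 : ℝ)*x^0*y^2 + (-63/10 : ℝ)*x^0*y^3 + (28/5 : ℝ)*x^0*y^4 + (0:ℝ)*y^5 + (0:ℝ)*y^6 + (0:ℝ)*y^7)
      (fun y _ => by ring), ipoly]
    ring
  rw [intervalIntegral.integral_congr (g := fun x => (19/200 : ℝ) + (-1 : ℝ)*x + (7/2 : ℝ)*x^2 + (-11/2 : ℝ)*x^3 + (161/40 : ℝ)*x^4 + (-28/25 : ℝ)*x^5 + (0 : ℝ)*x^6 + (0 : ℝ)*x^7) (fun x _ => hin x), ipoly]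
  norm_num

lemma dbl_0_2 :
    (∫ x in (0:ℝ)..1, ∫ y in (0:ℝ)..(1-x),
      (28/5 * y^3 - 63/10 * y^2 + 9/5 * y - 1/10) * (x^0 * y^2)) = (1/200 : ℝ) := by
  have hin : ∀ x : ℝ, (∫ y in (0:ℝ)..(1-x),
      (28/5 * y^3 - 63/10 * y^2 + 9/5 * y - 1/10) * (x^0 * y^2))
      = (9/100 : ℝ) + (-1 : ℝ)*x + (4 : ℝ)*x^2 + (-47/6 : ℝ)*x^3 + (163/20 : ℝ)*x^4 + (-217/50 : ℝ)*x^5 + (14/15 : ℝ)*x^6 + (0 : ℝ)*x^7 := by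
    intro x
    rw [intervalIntegral.integral_congr
      (g := fun y => (0:ℝ) + (0:ℝ)*y + (-1/10 : ℝ)*x^0*y^2 + (9/5 : ℝ)*x^0*y^3 + (-63/10 : ℝ)*x^0*y^4 + (28/5 : ℝ)*x^0*y^5 + (0:ℝ)*y^6 + (0:ℝ)*y^7)
      (fun y _ => by ring), ipoly]
    ring
  rw [intervalIntegral.integral_congr (g := fun x => (9/100 : ℝ) + (-1 : ℝ)*x + (4 : ℝ)*x^2 + (-47/6 : ℝ)*x^3 + (163/20 : ℝ)*x^4 + (-217/50 : ℝ)*x^5 + (14/15 : ℝ)*x^6 + (0 : ℝ)*x^7) (fun x _ => hin x), ipoly]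
  norm_num

lemma dbl_0_3 :
    (∫ x in (0:ℝ)..1, ∫ y in (0:ℝ)..(1-x),
      (28/5 * y^3 - 63/10 * y^2 + 9/5 * y - 1/10) * (x^0 * y^3)) = (1/200 : ℝ) := by
  have hin : ∀ x : ℝ, (∫ y in (0:ℝ)..(1-x),
      (28/5 * y^3 - 63/10 * y^2 + 9/5 * y - 1/10) * (x^0 * y^3))
      = (17/200 : ℝ) + (-1 : ℝ)*x + (9/2 : ℝ)*x^2 + (-21/2 : ℝ)*x^3 + (561/40 : ℝ)*x^4 + (-543/50 : ℝ)*x^5 + (91/20 : ℝ)*x^6 + (-4/5 : ℝ)*x^7 := by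
    intro x
    rw [intervalIntegral.integral_congr
      (g := fun y => (0:ℝ) + (0:ℝ)*y + (0:ℝ)*y^2 + (-1/10 : ℝ)*x^0*y^3 + (9/5 : ℝ)*x^0*y^4 + (-63/10 : ℝ)*x^0*y^5 + (28/5 : ℝ)*x^0*y^6 + (0:ℝ)*y^7)
      (fun y _ => by ring), ipoly]
    ring
  rw [intervalIntegral.integral_congr (g := fun x => (17/200 : ℝ) + (-1 : ℝ)*x + (9/2 : ℝ)*x^2 + (-21/2 : ℝ)*x^3 + (561/40 : ℝ)*x^4 + (-543/50 : ℝ)*x^5 + (91/20 : ℝ)*x^6 + (-4/5 : ℝ)*x^7) (fun x _ => hin x), ipoly]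
  norm_num

lemma dbl_1_0 :
    (∫ x in (0:ℝ)..1, ∫ y in (0:ℝ)..(1-x),
      (28/5 * y^3 - 63/10 * y^2 + 9/5 * y - 1/10) * (x^1 * y^0)) = (0 : ℝ) := by
  have hin : ∀ x : ℝ, (∫ y in (0:ℝ)..(1-x),
      (28/5 * y^3 - 63/10 * y^2 + 9/5 * y - 1/10) * (x^1 * y^0))
      = (0 : ℝ) + (1/10 : ℝ)*x + (-1 : ℝ)*x^2 + (3 : ℝ)*x^3 + (-7/2 : ℝ)*x^4 + (7/5 : ℝ)*x^5 + (0 : ℝ)*x^6 + (0 : ℝ)*x^7 := by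
    intro x
    rw [intervalIntegral.integral_congr
      (g := fun y => (-1/10 : ℝ)*x^1 + (9/5 : ℝ)*x^1*y + (-63/10 : ℝ)*x^1*y^2 + (28/5 : ℝ)*x^1*y^3 + (0:ℝ)*y^4 + (0:ℝ)*y^5 + (0:ℝ)*y^6 + (0:ℝ)*y^7)
      (fun y _ => by ring), ipoly]
    ring
  rw [intervalIntegral.integral_congr (g := fun x => (0 : ℝ) + (1/10 : ℝ)*x + (-1 : ℝ)*x^2 + (3 : ℝ)*x^3 + (-7/2 : ℝ)*x^4 + (7/5 : ℝ)*x^5 + (0 : ℝ)*x^6 + (0 : ℝ)*x^7) (fun x _ => hin x), ipoly]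
  norm_num

lemma dbl_1_1 :
    (∫ x in (0:ℝ)..1, ∫ y in (0:ℝ)..(1-x),
      (28/5 * y^3 - 63/10 * y^2 + 9/5 * y - 1/10) * (x^1 * y^1)) = (0 : ℝ) := by
  have hin : ∀ x : ℝ, (∫ y in (0:ℝ)..(1-x),
      (28/5 * y^3 - 63/10 * y^2 + 9/5 * y - 1/10) * (x^1 * y^1))
      = (0 : ℝ) + (19/200 : ℝ)*x + (-1 : ℝ)*x^2 + (7/2 : ℝ)*x^3 + (-11/2 : ℝ)*x^4 + (161/40 : ℝ)*x^5 + (-28/25 : ℝ)*x^6 + (0 : ℝ)*x^7 := by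
    intro x
    rw [intervalIntegral.integral_congr
      (g := fun y => (0:ℝ) + (-1/10 : ℝ)*x^1*y + (9/5 : ℝ)*x^1*y^2 + (-63/10 : ℝ)*x^1*y^3 + (28/5 : ℝ)*x^1*y^4 + (0:ℝ)*y^5 + (0:ℝ)*y^6 + (0:ℝ)*y^7)
      (fun y _ => by ring), ipoly]
    ring
  rw [intervalIntegral.integral_congr (g := fun x => (0 : ℝ) + (19/200 : ℝ)*x + (-1 : ℝ)*x^2 + (7/2 : ℝ)*x^3 + (-11/2 : ℝ)*x^4 + (161/40 : ℝ)*x^5 + (-28/25 : ℝ)*x^6 + (0 : ℝ)*x^7) (fun x _ => hin x), ipoly]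
  norm_num

lemma dbl_1_2 :
    (∫ x in (0:ℝ)..1, ∫ y in (0:ℝ)..(1-x),
      (28/5 * y^3 - 63/10 * y^2 + 9/5 * y - 1/10) * (x^1 * y^2)) = (0 : ℝ) := by
  have hin : ∀ x : ℝ, (∫ y in (0:ℝ)..(1-x),
      (28/5 * y^3 - 63/10 * y^2 + 9/5 * y - 1/10) * (x^1 * y^2))
      = (0 : ℝ) + (9/100 : ℝ)*x + (-1 : ℝ)*x^2 + (4 : ℝ)*x^3 + (-47/6 : ℝ)*x^4 + (163/20 : ℝ)*x^5 + (-217/50 : ℝ)*x^6 + (14/15 : ℝ)*x^7 := by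
    intro x
    rw [intervalIntegral.integral_congr
      (g := fun y => (0:ℝ) + (0:ℝ)*y + (-1/10 : ℝ)*x^1*y^2 + (9/5 : ℝ)*x^1*y^3 + (-63/10 : ℝ)*x^1*y^4 + (28/5 : ℝ)*x^1*y^5 + (0:ℝ)*y^6 + (0:ℝ)*y^7)
      (fun y _ => by ring), ipoly]
    ring
  rw [intervalIntegral.integral_congr (g := fun x => (0 : ℝ) + (9/100 : ℝ)*x + (-1 : ℝ)*x^2 + (4 : ℝ)*x^3 + (-47/6 : ℝ)*x^4 + (163/20 : ℝ)*x^5 + (-217/50 : ℝ)*x^6 + (14/15 : ℝ)*x^7) (fun x _ => hin x), ipoly]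
  norm_num

lemma dbl_2_0 :
    (∫ x in (0:ℝ)..1, ∫ y in (0:ℝ)..(1-x),
      (28/5 * y^3 - 63/10 * y^2 + 9/5 * y - 1/10) * (x^2 * y^0)) = (0 : ℝ) := by
  have hin : ∀ x : ℝ, (∫ y in (0:ℝ)..(1-x),
      (28/5 * y^3 - 63/10 * y^2 + 9/5 * y - 1/10) * (x^2 * y^0))
      = (0 : ℝ) + (0 : ℝ)*x + (1/10 : ℝ)*x^2 + (-1 : ℝ)*x^3 + (3 : ℝ)*x^4 + (-7/2 : ℝ)*x^5 + (7/5 : ℝ)*x^6 + (0 : ℝ)*x^7 := by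
    intro x
    rw [intervalIntegral.integral_congr
      (g := fun y => (-1/10 : ℝ)*x^2 + (9/5 : ℝ)*x^2*y + (-63/10 : ℝ)*x^2*y^2 + (28/5 : ℝ)*x^2*y^3 + (0:ℝ)*y^4 + (0:ℝ)*y^5 + (0:ℝ)*y^6 + (0:ℝ)*y^7)
      (fun y _ => by ring), ipoly]
    ring
  rw [intervalIntegral.integral_congr (g := fun x => (0 : ℝ) + (0 : ℝ)*x + (1/10 : ℝ)*x^2 + (-1 : ℝ)*x^3 + (3 : ℝ)*x^4 + (-7/2 : ℝ)*x^5 + (7/5 : ℝ)*x^6 + (0 : ℝ)*x^7) (fun x _ => hin x), ipoly]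
  norm_num

lemma dbl_2_1 :
    (∫ x in (0:ℝ)..1, ∫ y in (0:ℝ)..(1-x),
      (28/5 * y^3 - 63/10 * y^2 + 9/5 * y - 1/10) * (x^2 * y^1)) = (0 : ℝ) := by
  have hin : ∀ x : ℝ, (∫ y in (0:ℝ)..(1-x),
      (28/5 * y^3 - 63/10 * y^2 + 9/5 * y - 1/10) * (x^2 * y^1))
      = (0 : ℝ) + (0 : ℝ)*x + (19/200 : ℝ)*x^2 + (-1 : ℝ)*x^3 + (7/2 : ℝ)*x^4 + (-11/2 : ℝ)*x^5 + (161/40 : ℝ)*x^6 + (-28/25 : ℝ)*x^7 := by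
    intro x
    rw [intervalIntegral.integral_congr
      (g := fun y => (0:ℝ) + (-1/10 : ℝ)*x^2*y + (9/5 : ℝ)*x^2*y^2 + (-63/10 : ℝ)*x^2*y^3 + (28/5 : ℝ)*x^2*y^4 + (0:ℝ)*y^5 + (0:ℝ)*y^6 + (0:ℝ)*y^7)
      (fun y _ => by ring), ipoly]
    ring
  rw [intervalIntegral.integral_congr (g := fun x => (0 : ℝ) + (0 : ℝ)*x + (19/200 : ℝ)*x^2 + (-1 : ℝ)*x^3 + (7/2 : ℝ)*x^4 + (-11/2 : ℝ)*x^5 + (161/40 : ℝ)*x^6 + (-28/25 : ℝ)*x^7) (fun x _ => hin x), ipoly]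
  norm_num

lemma dbl_3_0 :
    (∫ x in (0:ℝ)..1, ∫ y in (0:ℝ)..(1-x),
      (28/5 * y^3 - 63/10 * y^2 + 9/5 * y - 1/10) * (x^3 * y^0)) = (0 : ℝ) := by
  have hin : ∀ x : ℝ, (∫ y in (0:ℝ)..(1-x),
      (28/5 * y^3 - 63/10 * y^2 + 9/5 * y - 1/10) * (x^3 * y^0))
      = (0 : ℝ) + (0 : ℝ)*x + (0 : ℝ)*x^2 + (1/10 : ℝ)*x^3 + (-1 : ℝ)*x^4 + (3 : ℝ)*x^5 + (-7/2 : ℝ)*x^6 + (7/5 : ℝ)*x^7 := by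
    intro x
    rw [intervalIntegral.integral_congr
      (g := fun y => (-1/10 : ℝ)*x^3 + (9/5 : ℝ)*x^3*y + (-63/10 : ℝ)*x^3*y^2 + (28/5 : ℝ)*x^3*y^3 + (0:ℝ)*y^4 + (0:ℝ)*y^5 + (0:ℝ)*y^6 + (0:ℝ)*y^7)
      (fun y _ => by ring), ipoly]
    ring
  rw [intervalIntegral.integral_congr (g := fun x => (0 : ℝ) + (0 : ℝ)*x + (0 : ℝ)*x^2 + (1/10 : ℝ)*x^3 + (-1 : ℝ)*x^4 + (3 : ℝ)*x^5 + (-7/2 : ℝ)*x^6 + (7/5 : ℝ)*x^7) (fun x _ => hin x), ipoly]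
  norm_num



lemma refT_closed : IsClosed refT := by
  have : refT = ((fun p : ℝ × ℝ => p.1) ⁻¹' Set.Ici 0) ∩
      (((fun p : ℝ × ℝ => p.2) ⁻¹' Set.Ici 0) ∩ ((fun p : ℝ × ℝ => p.1 + p.2) ⁻¹' Set.Iic 1)) := rfl
  rw [this]
  exact (isClosed_Ici.preimage continuous_fst).inter
    ((isClosed_Ici.preimage continuous_snd).inter
      (isClosed_Iic.preimage (continuous_fst.add continuous_snd)))

lemma refT_subset : refT ⊆ Set.Icc 0 1 ×ˢ Set.Icc 0 1 := by
  rintro ⟨x, y⟩ ⟨h1, h2, h3⟩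
  exact ⟨⟨h1, by dsimp at *; linarith⟩, ⟨h2, by dsimp at *; linarith⟩⟩

lemma refT_compact : IsCompact refT :=
  (isCompact_Icc.prod isCompact_Icc).of_isClosed_subset refT_closed refT_subset

lemma refT_meas : MeasurableSet refT := refT_closed.measurableSet

lemma tri_fubini (f : ℝ × ℝ → ℝ) (hf : Continuous f) :
    ∫ p in refT, f p = ∫ x in (0:ℝ)..1, ∫ y in (0:ℝ)..(1 - x), f (x, y) := by
  have hint : IntegrableOn (refT.indicator f) (Set.Icc 0 1 ×ˢ Set.Icc 0 1)
      ((volume : Measure ℝ).prod volume) := by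
    rw [← Measure.volume_eq_prod]
    exact ((hf.continuousOn.integrableOn_compact (isCompact_Icc.prod isCompact_Icc))).indicator
      refT_meas
  have h1 : ∫ p in refT, f p = ∫ p in Set.Icc 0 1 ×ˢ Set.Icc 0 1, refT.indicator f p := by
    rw [setIntegral_indicator refT_meas, Set.inter_eq_self_of_subset_right refT_subset]
  rw [h1]
  rw [show (volume : Measure (ℝ × ℝ)) = (volume : Measure ℝ).prod volume from
    Measure.volume_eq_prod ℝ ℝ]
  rw [setIntegral_prod _ hint]
  -- now: ∫ x in Icc 0 1, ∫ y in Icc 0 1, refT.indicator f (x, y) = ...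
  rw [show (∫ x in (0:ℝ)..1, ∫ y in (0:ℝ)..(1 - x), f (x, y))
      = ∫ x in Set.Icc (0:ℝ) 1, ∫ y in (0:ℝ)..(1 - x), f (x, y) by
    rw [integral_Icc_eq_integral_Ioc, intervalIntegral.integral_of_le (by norm_num : (0:ℝ) ≤ 1)]]
  apply setIntegral_congr_fun measurableSet_Icc
  intro x hx
  have hx0 : 0 ≤ x := hx.1
  have hx1 : x ≤ 1 := hx.2
  have hind : ∀ y : ℝ, refT.indicator f (x, y)
      = (Set.Icc 0 (1 - x)).indicator (fun y => f (x, y)) y := by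
    intro y
    by_cases h : y ∈ Set.Icc 0 (1 - x)
    · rw [Set.indicator_of_mem h, Set.indicator_of_mem]
      exact ⟨hx0, h.1, by have := h.2; dsimp; linarith⟩
    · rw [Set.indicator_of_notMem h, Set.indicator_of_notMem]
      intro hmem
      exact h ⟨hmem.2.1, by have := hmem.2.2; dsimp at this; linarith⟩
  simp only [hind]
  rw [setIntegral_indicator measurableSet_Icc,
    Set.inter_eq_self_of_subset_right (Set.Icc_subset_Icc le_rfl (by linarith)),
    integral_Icc_eq_integral_Ioc, ← intervalIntegral.integral_of_le (by linarith : (0:ℝ) ≤ 1 - x)]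

lemma key (i j : ℕ) (hij : i + j ≤ 3) :
    ∫ p in refT, sting p * (p.1 ^ i * p.2 ^ j) = 1/200 * ((0:ℝ) ^ i * (1:ℝ) ^ j) := by
  have hc : Continuous fun p : ℝ × ℝ => sting p * (p.1 ^ i * p.2 ^ j) := by
    unfold sting; fun_prop
  rw [tri_fubini _ hc]
  have hi : i ≤ 3 := by omega
  have hj : j ≤ 3 := by omega
  interval_cases i <;> interval_cases j <;>
    first
      | omega
      | exact dbl_0_0.trans (by norm_num)
      | exact dbl_0_1.trans (by norm_num)
      | exact dbl_0_2.trans (by norm_num)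
      | exact dbl_0_3.trans (by norm_num)
      | exact dbl_1_0.trans (by norm_num)
      | exact dbl_1_1.trans (by norm_num)
      | exact dbl_1_2.trans (by norm_num)
      | exact dbl_2_0.trans (by norm_num)
      | exact dbl_2_1.trans (by norm_num)
      | exact dbl_3_0.trans (by norm_num)


/-- Quadrature rule: for every polynomial q of total degree ≤ 3,
    ∫_K s·q = (|K|/100)·q(0,1), where |K| = 1/2. -/
theorem stmt0 (q : MvPolynomial (Fin 2) ℝ) (hq : q.totalDegree ≤ 3) :
    ∫ p in refT, sting p * evP q p = ((1:ℝ)/2) / 100 * evP q (0, 1) := by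
  have hev : ∀ p : ℝ × ℝ, evP q p
      = ∑ d ∈ q.support, MvPolynomial.coeff d q * (p.1 ^ d 0 * p.2 ^ d 1) := by
    intro p
    conv_lhs => rw [evP, q.as_sum]
    rw [map_sum]
    refine Finset.sum_congr rfl fun d _ => ?_
    rw [MvPolynomial.eval_monomial, Finsupp.prod_pow, Fin.prod_univ_two]
    simp [mul_assoc]
  have hdeg : ∀ d ∈ q.support, d 0 + d 1 ≤ 3 := by
    intro d hd
    have h1 := MvPolynomial.le_totalDegree hd
    have h2 : (d.sum fun _ e => e) = d 0 + d 1 := by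
      rw [Finsupp.sum_fintype _ _ (fun _ => rfl), Fin.sum_univ_two]
    omega
  have hint : ∀ d : Fin 2 →₀ ℕ, IntegrableOn
      (fun p : ℝ × ℝ => MvPolynomial.coeff d q * (sting p * (p.1 ^ d 0 * p.2 ^ d 1))) refT := by
    intro d
    refine Continuous.continuousOn ?_ |>.integrableOn_compact refT_compact
    unfold sting; fun_prop
  calc ∫ p in refT, sting p * evP q p
      = ∫ p in refT, ∑ d ∈ q.support,
          MvPolynomial.coeff d q * (sting p * (p.1 ^ d 0 * p.2 ^ d 1)) := by
        refine setIntegral_congr_fun refT_meas fun p _ => ?_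
        rw [hev p, Finset.mul_sum]
        exact Finset.sum_congr rfl fun d _ => by ring
    _ = ∑ d ∈ q.support, ∫ p in refT,
          MvPolynomial.coeff d q * (sting p * (p.1 ^ d 0 * p.2 ^ d 1)) :=
        integral_finset_sum _ fun d _ => hint d
    _ = ∑ d ∈ q.support, MvPolynomial.coeff d q * (1/200 * ((0:ℝ) ^ d 0 * (1:ℝ) ^ d 1)) := by
        refine Finset.sum_congr rfl fun d hd => ?_
        rw [MeasureTheory.integral_const_mul, key _ _ (hdeg d hd)]
    _ = ((1:ℝ)/2) / 100 * evP q (0, 1) := by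
        rw [hev ((0:ℝ), (1:ℝ)), Finset.mul_sum]
        exact Finset.sum_congr rfl fun d _ => by norm_num; ring
end

section
/- Let K be a nondegenerate triangle and suppose φ is a bivariate polynomial of degree at most 5 such that φ and its gradient ∇φ both vanish at every point of the three lines containing the edges of K. Then φ is the zero polynomial. -/
open Polynomial MvPolynomial

/-- Chain rule for substituting univariate polynomials in a bivariate polynomial. -/
lemma chainrule (f : Fin 2 → Polynomial ℝ) (p : MvPolynomial (Fin 2) ℝ) :
    Polynomial.derivative (MvPolynomial.aeval f p) =
      ∑ i, MvPolynomial.aeval f (MvPolynomial.pderiv i p) * Polynomial.derivative (f i) := by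
  induction p using MvPolynomial.induction_on with
  | C a => simp
  | add p q hp hq => simp [hp, hq, add_mul, Finset.sum_add_distrib]
  | mul_X p i hp =>
      simp only [map_mul, MvPolynomial.aeval_X, derivative_mul, hp, Derivation.leibniz, pderiv_X,
        smul_eq_mul, map_add, Finset.sum_mul, add_mul, Finset.sum_add_distrib, Pi.single_apply,
        apply_ite (MvPolynomial.aeval f), map_one, map_zero, ite_mul, one_mul, zero_mul]
      rw [add_comm]
      refine congrArg₂ (· + ·) ?_ ?_
      · simp [Finset.sum_ite_eq, mul_comm]
      · apply Finset.sum_congr rfl; intro j _; ring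

/-- Degree bound for substituting degree-≤1 polynomials. -/
lemma degbound (f : Fin 2 → Polynomial ℝ) (hf : ∀ i, (f i).natDegree ≤ 1)
    (p : MvPolynomial (Fin 2) ℝ) : (MvPolynomial.aeval f p).natDegree ≤ p.totalDegree := by
  rw [MvPolynomial.aeval_def, MvPolynomial.eval₂_eq]
  apply Polynomial.natDegree_sum_le_of_forall_le
  intro d hd
  calc (algebraMap ℝ ℝ[X] (p.coeff d) * ∏ i ∈ d.support, f i ^ d i).natDegree
      ≤ (algebraMap ℝ ℝ[X] (p.coeff d)).natDegree + (∏ i ∈ d.support, f i ^ d i).natDegree :=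
        Polynomial.natDegree_mul_le
    _ ≤ 0 + ∑ i ∈ d.support, (f i ^ d i).natDegree := by
        gcongr
        · exact le_of_eq (Polynomial.natDegree_C _)
        · exact Polynomial.natDegree_prod_le _ _
    _ ≤ ∑ i ∈ d.support, d i * 1 := by
        rw [zero_add]
        gcongr with i
        exact (Polynomial.natDegree_pow_le).trans (by gcongr; exact hf i)
    _ ≤ p.totalDegree := by
        simp only [mul_one]
        exact MvPolynomial.le_totalDegree hd

/-- A univariate real polynomial of degree at most 5 with three distinct double roots is zero. -/
lemma uni (q : ℝ[X]) (hq : q.natDegree ≤ 5) (t1 t2 t3 : ℝ)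
    (h12 : t1 ≠ t2) (h23 : t2 ≠ t3) (h13 : t1 ≠ t3)
    (e1 : q.eval t1 = 0) (d1 : (derivative q).eval t1 = 0)
    (e2 : q.eval t2 = 0) (d2 : (derivative q).eval t2 = 0)
    (e3 : q.eval t3 = 0) (d3 : (derivative q).eval t3 = 0) : q = 0 := by
  by_contra hq0
  have hd0 : derivative q ≠ 0 := by
    intro h
    have hn : q.natDegree = 0 := natDegree_eq_zero_of_derivative_eq_zero h
    have : q = Polynomial.C (q.coeff 0) := (Polynomial.eq_C_of_natDegree_eq_zero hn)
    rw [this] at e1 hq0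
    simp at e1
    simp [e1] at hq0
  have mult : ∀ t : ℝ, q.eval t = 0 → (derivative q).eval t = 0 →
      2 ≤ q.rootMultiplicity t := by
    intro t he hd
    have h1 : 0 < q.rootMultiplicity t := (rootMultiplicity_pos hq0).mpr he
    have h2 : 0 < (derivative q).rootMultiplicity t := (rootMultiplicity_pos hd0).mpr hd
    rw [derivative_rootMultiplicity_of_root he] at h2
    omega
  have hM : ({t1, t1, t2, t2, t3, t3} : Multiset ℝ) ≤ q.roots := by
    rw [Multiset.le_iff_count]
    intro a
    rw [Polynomial.count_roots]
    by_cases ha1 : a = t1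
    · subst ha1; simpa [Multiset.count_cons, h12, h13] using mult a e1 d1
    by_cases ha2 : a = t2
    · subst ha2; simpa [Multiset.count_cons, h12.symm, h23] using mult a e2 d2
    by_cases ha3 : a = t3
    · subst ha3; simpa [Multiset.count_cons, h13.symm, h23.symm] using mult a e3 d3
    simp [Multiset.count_cons, ha1, ha2, ha3]
  have hcard : (6 : ℕ) ≤ Multiset.card q.roots := by
    have := Multiset.card_le_card hM
    simpa using this
  have := Polynomial.card_roots' q
  omega

/-- Membership in the line through two points of `ℝ × ℝ`. -/
lemma mem_line_iff (P Q R : ℝ × ℝ) :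
    R ∈ (affineSpan ℝ ({P, Q} : Set (ℝ × ℝ)) : Set (ℝ × ℝ)) ↔
      ∃ s : ℝ, s • (Q - P) = R - P := by
  constructor
  · intro h
    rw [SetLike.mem_coe] at h
    have h2 : (R - P) +ᵥ P ∈ line[ℝ, P, Q] := by
      simpa [vadd_eq_add, sub_add_cancel] using h
    have h3 := (vadd_left_mem_affineSpan_pair (k := ℝ)).mp h2
    simpa [vsub_eq_sub] using h3
  · rintro ⟨s, hs⟩
    rw [SetLike.mem_coe]
    have h2 := AffineMap.lineMap_mem_affineSpan_pair (k := ℝ) s P Q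
    rw [AffineMap.lineMap_apply] at h2
    simp only [vsub_eq_sub, vadd_eq_add] at h2
    rw [hs] at h2
    simpa [sub_add_cancel] using h2

/-- Rotation of an affinely independent triple. -/
lemma rot (A B C : ℝ × ℝ) (hK : AffineIndependent ℝ ![A, B, C]) :
    AffineIndependent ℝ ![B, C, A] := by
  have h := hK.comp_embedding (⟨![1, 2, 0], by decide⟩ : Fin 3 ↪ Fin 3)
  have he : ![B, C, A] = ![A, B, C] ∘ (⟨![1, 2, 0], by decide⟩ : Fin 3 ↪ Fin 3) := by
    funext i; fin_cases i <;> rfl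
  rw [he]; exact h

/-- Two edge lines of a nondegenerate triangle meet only at the common vertex. -/
lemma meet (A B C P : ℝ × ℝ) (hK : AffineIndependent ℝ ![A, B, C])
    (h1 : P ∈ (affineSpan ℝ ({A, B} : Set (ℝ × ℝ)) : Set (ℝ × ℝ)))
    (h2 : P ∈ (affineSpan ℝ ({B, C} : Set (ℝ × ℝ)) : Set (ℝ × ℝ))) : P = B := by
  obtain ⟨s, hs⟩ := (mem_line_iff A B P).mp h1
  obtain ⟨r, hr⟩ := (mem_line_iff B C P).mp h2
  have hli : LinearIndependent ℝ ![A - B, C - B] := by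
    have h := (affineIndependent_iff_linearIndependent_vsub ℝ ![A, B, C] 1).mp hK
    have he : Function.Injective
        (![(⟨0, by decide⟩ : {x : Fin 3 // x ≠ 1}), ⟨2, by decide⟩] : Fin 2 → _) := by decide
    have heq : ![A - B, C - B] =
        (fun i : {x : Fin 3 // x ≠ 1} => (![A, B, C] ↑i -ᵥ ![A, B, C] 1 : ℝ × ℝ)) ∘
          ![⟨0, by decide⟩, ⟨2, by decide⟩] := by
      funext i; fin_cases i <;> simp [vsub_eq_sub]
    rw [heq]
    exact h.comp _ he
  have heq : (1 - s) • (A - B) + (-r) • (C - B) = 0 := by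
    have e1 : P = s • (B - A) + A := by rw [hs]; abel
    rw [neg_smul, hr, e1]
    module
  obtain ⟨hz1, hz2⟩ := hli.eq_zero_of_pair heq
  have : r = 0 := by linarith [neg_eq_zero.mp hz2]
  rw [this, zero_smul] at hr
  have := hr.symm
  rwa [sub_eq_zero] at this

/-- A nonzero linear polynomial. -/
lemma linfac (a b : ℝ) (h : ¬(a = 0 ∧ b = 0)) :
    (Polynomial.C a * Polynomial.X - Polynomial.C b : ℝ[X]) ≠ 0 := by
  intro h0
  apply h
  constructor
  · have := congrArg (fun p : ℝ[X] => p.coeff 1) h0; simpa using this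
  · have := congrArg (fun p : ℝ[X] => p.coeff 0) h0
    simpa using this

/-- There is a slope avoiding three given directions. -/
lemma exists_slope (u₁ u₂ v₁ v₂ w₁ w₂ : ℝ) (hu : ¬(u₁ = 0 ∧ u₂ = 0))
    (hv : ¬(v₁ = 0 ∧ v₂ = 0)) (hw : ¬(w₁ = 0 ∧ w₂ = 0)) :
    ∃ m : ℝ, m * u₁ - u₂ ≠ 0 ∧ m * v₁ - v₂ ≠ 0 ∧ m * w₁ - w₂ ≠ 0 := by
  have hprod : ((Polynomial.C u₁ * Polynomial.X - Polynomial.C u₂) *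
      (Polynomial.C v₁ * Polynomial.X - Polynomial.C v₂) *
      (Polynomial.C w₁ * Polynomial.X - Polynomial.C w₂) : ℝ[X]) ≠ 0 :=
    mul_ne_zero (mul_ne_zero (linfac _ _ hu) (linfac _ _ hv)) (linfac _ _ hw)
  have hfin := Polynomial.finite_setOf_isRoot hprod
  obtain ⟨m, hm⟩ := hfin.infinite_compl.nonempty
  refine ⟨m, fun h => hm ?_, fun h => hm ?_, fun h => hm ?_⟩ <;>
      simp only [Set.mem_setOf_eq, Polynomial.IsRoot, Polynomial.eval_mul, Polynomial.eval_sub,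
        Polynomial.eval_C, Polynomial.eval_X]
  · rw [show u₁ * m - u₂ = 0 from by rw [mul_comm]; exact h]; ring
  · rw [show v₁ * m - v₂ = 0 from by rw [mul_comm]; exact h]; ring
  · rw [show w₁ * m - w₂ = 0 from by rw [mul_comm]; exact h]; ring

/-- Evaluation commutes with substitution. -/
lemma evalComp (g : Fin 2 → ℝ[X]) (t : ℝ) (p : MvPolynomial (Fin 2) ℝ) :
    Polynomial.eval t (MvPolynomial.aeval g p) =
      MvPolynomial.eval (fun i => Polynomial.eval t (g i)) p := by
  induction p using MvPolynomial.induction_on with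
  | C a => simp [MvPolynomial.algebraMap_eq]
  | add p q hp hq => simp [hp, hq]
  | mul_X p i hp => simp [hp]

/-- If a degree-≤5 polynomial and its gradient vanish on the three lines containing
    the edges of a nondegenerate triangle, then it is the zero polynomial. -/
theorem stmt3 (A B C : ℝ × ℝ) (hK : AffineIndependent ℝ ![A, B, C])
    (φ : MvPolynomial (Fin 2) ℝ) (hdeg : φ.totalDegree ≤ 5)
    (hvan : ∀ p ∈ (affineSpan ℝ ({A, B} : Set (ℝ × ℝ)) : Set (ℝ × ℝ)) ∪
        (affineSpan ℝ ({B, C} : Set (ℝ × ℝ)) : Set (ℝ × ℝ)) ∪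
        (affineSpan ℝ ({C, A} : Set (ℝ × ℝ)) : Set (ℝ × ℝ)),
      evP φ p = 0 ∧ evP (MvPolynomial.pderiv 0 φ) p = 0 ∧
        evP (MvPolynomial.pderiv 1 φ) p = 0) :
    φ = 0 := by
  classical
  -- distinct vertices
  have hAB : A ≠ B := by
    have := hK.injective.ne (show (0 : Fin 3) ≠ 1 by decide); simpa using this
  have hBC : B ≠ C := by
    have := hK.injective.ne (show (1 : Fin 3) ≠ 2 by decide); simpa using this
  have hCA : C ≠ A := by
    have := hK.injective.ne (show (2 : Fin 3) ≠ 0 by decide); simpa using this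
  -- choose a generic slope m
  obtain ⟨m, hm1, hm2, hm3⟩ := exists_slope (B.1 - A.1) (B.2 - A.2) (C.1 - B.1) (C.2 - B.2)
    (A.1 - C.1) (A.2 - C.2)
    (by rintro ⟨e1, e2⟩; exact hAB (Prod.ext_iff.mpr ⟨by linarith, by linarith⟩))
    (by rintro ⟨e1, e2⟩; exact hBC (Prod.ext_iff.mpr ⟨by linarith, by linarith⟩))
    (by rintro ⟨e1, e2⟩; exact hCA (Prod.ext_iff.mpr ⟨by linarith, by linarith⟩))
  set f : ℝ → Fin 2 → ℝ[X] :=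
    fun c => ![Polynomial.X, Polynomial.C m * Polynomial.X + Polynomial.C c] with hf
  -- evaluation of the restricted polynomial
  have hq0 : ∀ (c t : ℝ) (p : MvPolynomial (Fin 2) ℝ),
      Polynomial.eval t (MvPolynomial.aeval (f c) p) = evP p (t, m * t + c) := by
    intro c t p
    rw [evalComp]
    have : (fun i => Polynomial.eval t (f c i)) = ![t, m * t + c] := by
      funext i; fin_cases i <;> simp [hf]
    rw [this]; rfl
  -- each line of slope m hits each edge line
  have edge_hit : ∀ (c : ℝ) (P Q : ℝ × ℝ), m * (Q.1 - P.1) - (Q.2 - P.2) ≠ 0 →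
      ∃ t : ℝ, ((t, m * t + c) : ℝ × ℝ) ∈
        (affineSpan ℝ ({P, Q} : Set (ℝ × ℝ)) : Set (ℝ × ℝ)) := by
    intro c P Q hD
    set s : ℝ := (P.2 - m * P.1 - c) / (m * (Q.1 - P.1) - (Q.2 - P.2)) with hsdef
    have hs : s * (m * (Q.1 - P.1) - (Q.2 - P.2)) = P.2 - m * P.1 - c :=
      div_mul_cancel₀ _ hD
    refine ⟨P.1 + s * (Q.1 - P.1), (mem_line_iff P Q _).mpr ⟨s, ?_⟩⟩
    apply Prod.ext_iff.mpr
    constructor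
    · simp only [Prod.smul_def, Prod.fst_sub, smul_eq_mul]
      ring
    · simp only [Prod.smul_def, Prod.snd_sub, smul_eq_mul]
      linarith [hs]
  -- for good intercepts c, the restriction of φ vanishes identically
  have key : ∀ c : ℝ, c ≠ A.2 - m * A.1 → c ≠ B.2 - m * B.1 → c ≠ C.2 - m * C.1 →
      MvPolynomial.aeval (f c) φ = 0 := by
    intro c hcA hcB hcC
    obtain ⟨t1, ht1⟩ := edge_hit c A B hm1
    obtain ⟨t2, ht2⟩ := edge_hit c B C hm2
    obtain ⟨t3, ht3⟩ := edge_hit c C A hm3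
    have hv1 := hvan _ (Or.inl (Or.inl ht1))
    have hv2 := hvan _ (Or.inl (Or.inr ht2))
    have hv3 := hvan _ (Or.inr ht3)
    -- derivative of the restriction
    have hder : ∀ t : ℝ, Polynomial.eval t (Polynomial.derivative (MvPolynomial.aeval (f c) φ)) =
        evP (MvPolynomial.pderiv 0 φ) (t, m * t + c) +
          evP (MvPolynomial.pderiv 1 φ) (t, m * t + c) * m := by
      intro t
      rw [chainrule, Fin.sum_univ_two]
      have hd0 : Polynomial.derivative (f c 0) = 1 := by simp [hf]
      have hd1 : Polynomial.derivative (f c 1) = Polynomial.C m := by simp [hf]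
      rw [hd0, hd1]
      simp [hq0]
    -- distinctness of intersection parameters
    have hne12 : t1 ≠ t2 := by
      intro h
      have : ((t1, m * t1 + c) : ℝ × ℝ) = B := meet A B C _ hK ht1 (h ▸ ht2)
      apply hcB
      have h1 : t1 = B.1 := congrArg Prod.fst this
      have h2 : m * t1 + c = B.2 := congrArg Prod.snd this
      rw [h1] at h2; linarith
    have hne23 : t2 ≠ t3 := by
      intro h
      have : ((t2, m * t2 + c) : ℝ × ℝ) = C := meet B C A _ (rot A B C hK) ht2 (h ▸ ht3)
      apply hcC
      have h1 : t2 = C.1 := congrArg Prod.fst this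
      have h2 : m * t2 + c = C.2 := congrArg Prod.snd this
      rw [h1] at h2; linarith
    have hne13 : t1 ≠ t3 := by
      intro h
      have : ((t3, m * t3 + c) : ℝ × ℝ) = A :=
        meet C A B _ (rot B C A (rot A B C hK)) ht3 (h ▸ ht1)
      apply hcA
      have h1 : t3 = A.1 := congrArg Prod.fst this
      have h2 : m * t3 + c = A.2 := congrArg Prod.snd this
      rw [h1] at h2; linarith
    -- degree bound
    have hdeg' : (MvPolynomial.aeval (f c) φ).natDegree ≤ 5 := by
      refine le_trans (degbound _ ?_ _) hdeg
      intro i; fin_cases i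
      · simp [hf]
      · simpa [hf] using Polynomial.natDegree_linear_le (a := m) (b := c)
    exact uni _ hdeg' t1 t2 t3 hne12 hne23 hne13
      (by rw [hq0]; exact hv1.1) (by rw [hder]; rw [hv1.2.1, hv1.2.2]; ring)
      (by rw [hq0]; exact hv2.1) (by rw [hder]; rw [hv2.2.1, hv2.2.2]; ring)
      (by rw [hq0]; exact hv3.1) (by rw [hder]; rw [hv3.2.1, hv3.2.2]; ring)
  -- φ vanishes at every point
  have hall : ∀ x c : ℝ, MvPolynomial.eval ![x, m * x + c] φ = 0 := by
    intro x
    set r : ℝ[X] := MvPolynomial.aeval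
      ![Polynomial.C x, Polynomial.C (m * x) + Polynomial.X] φ with hrdef
    have hre : ∀ c : ℝ, Polynomial.eval c r = MvPolynomial.eval ![x, m * x + c] φ := by
      intro c
      rw [hrdef, evalComp]
      have harg : (fun i => Polynomial.eval c
          (![Polynomial.C x, Polynomial.C (m * x) + Polynomial.X] i)) = ![x, m * x + c] := by
        funext i; fin_cases i <;> simp
      rw [harg]
    have hr0 : r = 0 := by
      apply Polynomial.eq_zero_of_infinite_isRoot
      apply Set.Infinite.mono (s := ({A.2 - m * A.1, B.2 - m * B.1, C.2 - m * C.1} : Set ℝ)ᶜ)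
      · intro c hc
        simp only [Set.mem_compl_iff, Set.mem_insert_iff, Set.mem_singleton_iff, not_or] at hc
        obtain ⟨h1, h2, h3⟩ := hc
        have := key c h1 h2 h3
        show Polynomial.IsRoot r c
        rw [Polynomial.IsRoot, hre]
        have := hq0 c x φ
        rw [key c h1 h2 h3] at this
        simp only [Polynomial.eval_zero] at this
        rw [← this.symm]
        rfl
      · exact (Set.toFinite _).infinite_compl
    intro c
    rw [← hre c, hr0, Polynomial.eval_zero]
  apply MvPolynomial.funext
  intro v
  rw [map_zero]
  have hv : v = ![v 0, v 1] := by
    funext i; fin_cases i <;> rfl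
  rw [hv]
  have := hall (v 0) (v 1 - m * v 0)
  rwa [show m * v 0 + (v 1 - m * v 0) = v 1 by ring] at this
end

section
/- For a nondegenerate triangle K with vertices V1, V2, V3, the three sting functions s_{V1 K}, s_{V2 K}, s_{V3 K} are linearly independent, i.e., the space they span has dimension 3. -/
open MeasureTheory

lemma continuous_evP (q : MvPolynomial (Fin 2) ℝ) : Continuous (evP q) := by
  have h1 : Continuous fun p : ℝ × ℝ => (![p.1, p.2] : Fin 2 → ℝ) := by
    apply continuous_pi
    intro i
    fin_cases i
    · exact continuous_fst
    · exact continuous_snd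
  exact (MvPolynomial.continuous_eval (p := q)).comp h1

/-- The three sting functions of a nondegenerate triangle are linearly independent. -/
theorem stmt6 (A B C : ℝ × ℝ) (hK : AffineIndependent ℝ ![A, B, C])
    (s : Fin 3 → MvPolynomial (Fin 2) ℝ)
    (hdeg : ∀ i, (s i).totalDegree ≤ 3)
    (hquad : ∀ i, ∀ q : MvPolynomial (Fin 2) ℝ, q.totalDegree ≤ 3 →
      ∫ p in convexHull ℝ ({A, B, C} : Set (ℝ × ℝ)), evP (s i) p * evP q p =
        (volume (convexHull ℝ ({A, B, C} : Set (ℝ × ℝ)))).toReal / 100 *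
          evP q (![A, B, C] i)) :
    ∀ a : Fin 3 → ℝ,
      (∀ p ∈ convexHull ℝ ({A, B, C} : Set (ℝ × ℝ)), ∑ i, a i * evP (s i) p = 0) →
      ∀ i, a i = 0 := by
  intro a ha
  set K : Set (ℝ × ℝ) := convexHull ℝ ({A, B, C} : Set (ℝ × ℝ)) with hKdef
  have hrange : Set.range ![A, B, C] = ({A, B, C} : Set (ℝ × ℝ)) := by
    ext x
    constructor
    · rintro ⟨i, rfl⟩; fin_cases i <;> simp
    · intro hx
      simp only [Set.mem_insert_iff, Set.mem_singleton_iff] at hx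
      rcases hx with rfl | rfl | rfl
      exacts [⟨0, rfl⟩, ⟨1, rfl⟩, ⟨2, rfl⟩]
  -- K is compact
  have hfin : ({A, B, C} : Set (ℝ × ℝ)).Finite := Set.toFinite _
  have hKcompact : IsCompact K := hfin.isCompact_convexHull (𝕜 := ℝ)
  -- positive volume
  have hspan : affineSpan ℝ (Set.range ![A, B, C]) = ⊤ := by
    rw [hK.affineSpan_eq_top_iff_card_eq_finrank_add_one]
    simp
  have hint : (interior K).Nonempty := by
    rw [hKdef, ← hrange]
    exact interior_convexHull_nonempty_iff_affineSpan_eq_top.2 hspan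
  have hvolpos : 0 < (volume K).toReal := by
    refine ENNReal.toReal_pos ?_ hKcompact.measure_lt_top.ne
    exact ((isOpen_interior.measure_pos volume hint).trans_le
      (measure_mono interior_subset)).ne'
  -- key: for any q of degree ≤ 3, ∑ a i * evP q (V i) = 0
  have key : ∀ q : MvPolynomial (Fin 2) ℝ, q.totalDegree ≤ 3 →
      ∑ i, a i * evP q (![A, B, C] i) = 0 := by
    intro q hq
    have hint_i : ∀ i : Fin 3, IntegrableOn
        (fun p => a i * (evP (s i) p * evP q p)) K volume := by
      intro i
      exact (((continuous_evP (s i)).mul (continuous_evP q)).const_smul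
        (a i)).continuousOn.integrableOn_compact hKcompact
    have h1 : ∫ p in K, ∑ i, a i * (evP (s i) p * evP q p) = 0 := by
      rw [setIntegral_congr_fun hKcompact.measurableSet
        (g := fun _ => (0 : ℝ)) ?_]
      · simp
      · intro p hp
        have := ha p hp
        have : (∑ i, a i * evP (s i) p) * evP q p = 0 := by rw [this]; ring
        rw [← this, Finset.sum_mul]
        ring_nf
        exact Finset.sum_congr rfl fun _ _ => by ring
      
    rw [integral_finset_sum _ (fun i _ => hint_i i)] at h1
    have h2 : ∀ i : Fin 3, ∫ p in K, a i * (evP (s i) p * evP q p) =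
        a i * ((volume K).toReal / 100 * evP q (![A, B, C] i)) := by
      intro i
      rw [MeasureTheory.integral_const_mul, hquad i q hq]
    simp_rw [h2] at h1
    have h3 : ((volume K).toReal / 100) * ∑ i, a i * evP q (![A, B, C] i) = 0 := by
      rw [Finset.mul_sum]; rw [← h1]; congr 1; ext i; ring
    have hc : (volume K).toReal / 100 ≠ 0 := by positivity
    exact (mul_eq_zero.1 h3).resolve_left hc
  -- apply with q = 1, X 0, X 1
  have e1 : ∑ i, a i * evP 1 (![A, B, C] i) = 0 :=
    key 1 (by simp [MvPolynomial.totalDegree_one])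
  have ex : ∑ i, a i * evP (MvPolynomial.X 0) (![A, B, C] i) = 0 :=
    key (MvPolynomial.X 0) (by simp [MvPolynomial.totalDegree_X])
  have ey : ∑ i, a i * evP (MvPolynomial.X 1) (![A, B, C] i) = 0 :=
    key (MvPolynomial.X 1) (by simp [MvPolynomial.totalDegree_X])
  simp only [evP, map_one, MvPolynomial.eval_X, mul_one,
    Matrix.cons_val_zero, Matrix.cons_val_one, Matrix.head_cons] at e1 ex ey
  have hsum : ∑ i, a i = 0 := e1
  have hvec : ∑ i, a i • (![A, B, C] i) = (0 : ℝ × ℝ) := by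
    apply Prod.ext <;>
      simp [Prod.fst_sum, Prod.snd_sum, Fin.sum_univ_three] at ex ey ⊢ <;>
      [exact ex; exact ey]
  have := affineIndependent_iff.1 hK Finset.univ a hsum (by simpa using hvec)
  exact fun i => this i (Finset.mem_univ i)
end

section
/- Every element of the image of the divergence map on B(K) vanishes at the three vertices of K and has zero integral over K: if v is a pair of degree-≤4 polynomials vanishing on ∂K, then (div v)(V) = 0 for each vertex V of K and ∫_K div v dxdy = 0. -/
open MeasureTheory

/-- The divergence of a pair of bivariate polynomials. -/
noncomputable def divP (v : MvPolynomial (Fin 2) ℝ × MvPolynomial (Fin 2) ℝ) :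
    MvPolynomial (Fin 2) ℝ :=
  MvPolynomial.pderiv 0 v.1 + MvPolynomial.pderiv 1 v.2

@[simp] lemma evP_C (r : ℝ) (p : ℝ × ℝ) : evP (MvPolynomial.C r) p = r := by
  simp [evP]

@[simp] lemma evP_add (q₁ q₂ : MvPolynomial (Fin 2) ℝ) (p : ℝ × ℝ) :
    evP (q₁ + q₂) p = evP q₁ p + evP q₂ p := by simp [evP]

@[simp] lemma evP_mul (q₁ q₂ : MvPolynomial (Fin 2) ℝ) (p : ℝ × ℝ) :
    evP (q₁ * q₂) p = evP q₁ p * evP q₂ p := by simp [evP]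

@[simp] lemma evP_zero (p : ℝ × ℝ) : evP 0 p = 0 := by simp [evP]

@[simp] lemma evP_X0 (p : ℝ × ℝ) : evP (MvPolynomial.X 0) p = p.1 := by simp [evP]

@[simp] lemma evP_X1 (p : ℝ × ℝ) : evP (MvPolynomial.X 1) p = p.2 := by simp [evP]

/-- derivative of evP along a line -/
lemma evP_hasDerivAt_line (q : MvPolynomial (Fin 2) ℝ) (a d : ℝ × ℝ) (t : ℝ) :
    HasDerivAt (fun s => evP q (a + s • d))
      (d.1 * evP (MvPolynomial.pderiv 0 q) (a + t • d)
        + d.2 * evP (MvPolynomial.pderiv 1 q) (a + t • d)) t := by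
  induction q using MvPolynomial.induction_on with
  | C r => simpa using hasDerivAt_const t r
  | add q₁ q₂ h₁ h₂ =>
    have := h₁.fun_add h₂
    simp only [map_add, evP_add] at this ⊢
    refine this.congr_deriv ?_; ring
  | mul_X q i h =>
    have hX : HasDerivAt (fun s => evP (MvPolynomial.X i : MvPolynomial (Fin 2) ℝ) (a + s • d))
        (evP (MvPolynomial.X i : MvPolynomial (Fin 2) ℝ) d) t := by
      fin_cases i
      · simp only [evP_X0, Prod.fst_add, Prod.smul_fst, smul_eq_mul]
        simpa using (hasDerivAt_const t a.1).fun_add ((hasDerivAt_id t).mul_const d.1)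
      · simp only [evP_X1, Prod.snd_add, Prod.smul_snd, smul_eq_mul]
        simpa using (hasDerivAt_const t a.2).fun_add ((hasDerivAt_id t).mul_const d.2)
    have := h.fun_mul hX
    have hfun : (fun s : ℝ => evP (q * MvPolynomial.X i) (a + s • d))
        = fun s : ℝ => evP q (a + s • d) * evP (MvPolynomial.X i) (a + s • d) := by
      funext s; simp
    rw [hfun]
    refine this.congr_deriv ?_
    clear this hX h
    fin_cases i
    · simp only [Fin.mk_zero, Fin.mk_one, MvPolynomial.pderiv_mul, MvPolynomial.pderiv_X_self,
        MvPolynomial.pderiv_X_of_ne (show ((0:Fin 2):Fin 2) ≠ 1 by decide),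
        MvPolynomial.pderiv_X_of_ne (show ((1:Fin 2):Fin 2) ≠ 0 by decide),
        evP_add, evP_mul, evP_X0, evP_X1, evP_zero, mul_zero, add_zero, mul_one]
      ring
    · simp only [Fin.mk_zero, Fin.mk_one, MvPolynomial.pderiv_mul, MvPolynomial.pderiv_X_self,
        MvPolynomial.pderiv_X_of_ne (show ((0:Fin 2):Fin 2) ≠ 1 by decide),
        MvPolynomial.pderiv_X_of_ne (show ((1:Fin 2):Fin 2) ≠ 0 by decide),
        evP_add, evP_mul, evP_X0, evP_X1, evP_zero, mul_zero, add_zero, mul_one]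
      ring

lemma evP_hasDerivAt_x (w : MvPolynomial (Fin 2) ℝ) (x y : ℝ) :
    HasDerivAt (fun t => evP w (t, y)) (evP (MvPolynomial.pderiv 0 w) (x, y)) x := by
  have h := evP_hasDerivAt_line w ((0:ℝ), y) ((1:ℝ), (0:ℝ)) x
  have e : ∀ s : ℝ, ((0:ℝ), y) + s • ((1:ℝ), (0:ℝ)) = (s, y) := by
    intro s; apply Prod.ext <;> simp
  simp only [e] at h
  simpa using h

lemma evP_hasDerivAt_y (w : MvPolynomial (Fin 2) ℝ) (x y : ℝ) :
    HasDerivAt (fun t => evP w (x, t)) (evP (MvPolynomial.pderiv 1 w) (x, y)) y := by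
  have h := evP_hasDerivAt_line w (x, (0:ℝ)) ((0:ℝ), (1:ℝ)) y
  have e : ∀ s : ℝ, (x, (0:ℝ)) + s • ((0:ℝ), (1:ℝ)) = (x, s) := by
    intro s; apply Prod.ext <;> simp
  simp only [e] at h
  simpa using h

lemma edge_deriv (w : MvPolynomial (Fin 2) ℝ) (P Q : ℝ × ℝ)
    (h : ∀ p ∈ segment ℝ P Q, evP w p = 0) :
    (Q - P).1 * evP (MvPolynomial.pderiv 0 w) P
      + (Q - P).2 * evP (MvPolynomial.pderiv 1 w) P = 0 := by
  have hD := evP_hasDerivAt_line w P (Q - P) 0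
  rw [zero_smul, add_zero] at hD
  have hzero : ∀ t ∈ Set.Icc (0:ℝ) 1, evP w (P + t • (Q - P)) = 0 := by
    intro t ht
    apply h
    rw [segment_eq_image']
    exact ⟨t, ht, rfl⟩
  have h1 : HasDerivWithinAt (fun s : ℝ => evP w (P + s • (Q - P)))
      ((Q - P).1 * evP (MvPolynomial.pderiv 0 w) P
        + (Q - P).2 * evP (MvPolynomial.pderiv 1 w) P) (Set.Icc 0 1) 0 :=
    hD.hasDerivWithinAt
  have h2 : HasDerivWithinAt (fun s : ℝ => evP w (P + s • (Q - P))) 0 (Set.Icc 0 1) 0 := by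
    refine (hasDerivWithinAt_const (0:ℝ) (Set.Icc (0:ℝ) 1) (0:ℝ)).congr ?_ ?_
    · intro t ht; rw [hzero t ht]
    · rw [hzero 0 ⟨le_refl 0, zero_le_one⟩]
  exact ((uniqueDiffOn_Icc zero_lt_one) 0 ⟨le_refl 0, zero_le_one⟩).eq_deriv _ h1 h2

lemma det_ne (P Q R : ℝ × ℝ) (h : AffineIndependent ℝ ![P, Q, R]) :
    (Q - P).1 * (R - P).2 - (Q - P).2 * (R - P).1 ≠ 0 := by
  intro hdet
  have hdet' : (Q.1 - P.1) * (R.2 - P.2) - (Q.2 - P.2) * (R.1 - P.1) = 0 := by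
    simpa using hdet
  have key : ∀ s t : ℝ, s * (Q.1 - P.1) + t * (R.1 - P.1) = 0 →
      s * (Q.2 - P.2) + t * (R.2 - P.2) = 0 → s = 0 ∧ t = 0 := by
    intro s t h1 h2
    have hws : ∑ i, (![-(s+t), s, t] : Fin 3 → ℝ) i = 0 := by
      simp only [Fin.sum_univ_three, Matrix.cons_val_zero, Matrix.cons_val_one, Matrix.head_cons,
        Matrix.cons_val_two, Matrix.tail_cons]
      ring
    have hvs : ∑ i, (![-(s+t), s, t] : Fin 3 → ℝ) i • (![P, Q, R] i) = 0 := by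
      simp only [Fin.sum_univ_three, Matrix.cons_val_zero, Matrix.cons_val_one, Matrix.head_cons,
        Matrix.cons_val_two, Matrix.tail_cons]
      apply Prod.ext
      · simp only [Prod.fst_add, Prod.smul_fst, smul_eq_mul, Prod.fst_zero]
        linarith [h1]
      · simp only [Prod.snd_add, Prod.smul_snd, smul_eq_mul, Prod.snd_zero]
        linarith [h2]
    have := affineIndependent_iff.1 h Finset.univ ![-(s+t), s, t] hws hvs
    exact ⟨by simpa using this 1 (Finset.mem_univ 1), by simpa using this 2 (Finset.mem_univ 2)⟩
  have k1 := key (R.1 - P.1) (-(Q.1 - P.1)) (by ring) (by linear_combination -hdet')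
  have k2 := key (R.2 - P.2) (-(Q.2 - P.2)) (by linear_combination hdet') (by ring)
  have := key 1 0 (by linarith [k1.2]) (by linarith [k2.2])
  exact one_ne_zero this.1

lemma grad_zero (w : MvPolynomial (Fin 2) ℝ) (P Q R : ℝ × ℝ)
    (h : AffineIndependent ℝ ![P, Q, R])
    (hPQ : ∀ p ∈ segment ℝ P Q, evP w p = 0) (hPR : ∀ p ∈ segment ℝ P R, evP w p = 0) :
    evP (MvPolynomial.pderiv 0 w) P = 0 ∧ evP (MvPolynomial.pderiv 1 w) P = 0 := by
  have e1 := edge_deriv w P Q hPQ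
  have e2 := edge_deriv w P R hPR
  have hdet := det_ne P Q R h
  constructor
  · have hmul : ((Q - P).1 * (R - P).2 - (Q - P).2 * (R - P).1)
        * evP (MvPolynomial.pderiv 0 w) P = 0 := by
      linear_combination (R - P).2 * e1 - (Q - P).2 * e2
    exact (mul_eq_zero.1 hmul).resolve_left hdet
  · have hmul : ((Q - P).1 * (R - P).2 - (Q - P).2 * (R - P).1)
        * evP (MvPolynomial.pderiv 1 w) P = 0 := by
      linear_combination (Q - P).1 * e2 - (R - P).1 * e1
    exact (mul_eq_zero.1 hmul).resolve_left hdet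

lemma affInd_perm (A B C : ℝ × ℝ) (h : AffineIndependent ℝ ![A, B, C]) (σ : Fin 3 → Fin 3)
    (hσ : Function.Injective σ) : AffineIndependent ℝ (![A, B, C] ∘ σ) :=
  h.comp_embedding ⟨σ, hσ⟩

lemma range_matrix (A B C : ℝ × ℝ) : Set.range ![A, B, C] = ({A, B, C} : Set (ℝ × ℝ)) := by
  ext p
  constructor
  · rintro ⟨i, rfl⟩
    fin_cases i
    · exact Set.mem_insert _ _
    · exact Set.mem_insert_of_mem _ (Set.mem_insert _ _)
    · exact Set.mem_insert_of_mem _ (Set.mem_insert_of_mem _ rfl)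
  · rintro (rfl | rfl | rfl)
    exacts [⟨0, rfl⟩, ⟨1, rfl⟩, ⟨2, rfl⟩]

lemma frontier_subset_segments (A B C : ℝ × ℝ) (hK : AffineIndependent ℝ ![A, B, C]) :
    frontier (convexHull ℝ ({A, B, C} : Set (ℝ × ℝ))) ⊆
      segment ℝ A B ∪ segment ℝ B C ∪ segment ℝ C A := by
  have htop : affineSpan ℝ (Set.range ![A, B, C]) = ⊤ := by
    rw [hK.affineSpan_eq_top_iff_card_eq_finrank_add_one]
    simp
  let b : AffineBasis (Fin 3) ℝ (ℝ × ℝ) := ⟨![A, B, C], hK, htop⟩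
  have hb : ∀ i, b i = ![A, B, C] i := fun _ => rfl
  intro p hp
  have hKcpt : IsCompact (convexHull ℝ ({A, B, C} : Set (ℝ × ℝ))) := by
    refine Set.Finite.isCompact_convexHull (𝕜 := ℝ) ?_
    exact (Set.finite_singleton C).insert B |>.insert A
  rw [hKcpt.isClosed.frontier_eq] at hp
  obtain ⟨hpK, hpnotint⟩ := hp
  have hmem : p ∈ convexHull ℝ (Set.range (b : Fin 3 → ℝ × ℝ)) := by
    have : Set.range (b : Fin 3 → ℝ × ℝ) = ({A, B, C} : Set (ℝ × ℝ)) := by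
      rw [show (b : Fin 3 → ℝ × ℝ) = ![A, B, C] from rfl, range_matrix]
    rw [this]; exact hpK
  have hnn : ∀ i, 0 ≤ b.coord i p := by
    rw [b.convexHull_eq_nonneg_coord] at hmem; exact hmem
  have hnotall : ¬ ∀ i, 0 < b.coord i p := by
    intro hpos
    apply hpnotint
    have hint := b.interior_convexHull
    have : Set.range (b : Fin 3 → ℝ × ℝ) = ({A, B, C} : Set (ℝ × ℝ)) := by
      rw [show (b : Fin 3 → ℝ × ℝ) = ![A, B, C] from rfl, range_matrix]
    rw [this] at hint
    rw [hint]
    exact hpos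
  push_neg at hnotall
  obtain ⟨i, hi⟩ := hnotall
  have hzero : b.coord i p = 0 := le_antisymm hi (hnn i)
  have hsum : b.coord 0 p + b.coord 1 p + b.coord 2 p = 1 := by
    have := b.sum_coord_apply_eq_one p
    rw [Fin.sum_univ_three] at this
    exact this
  have hrep : b.coord 0 p • A + b.coord 1 p • B + b.coord 2 p • C = p := by
    have := b.linear_combination_coord_eq_self p
    simpa [Fin.sum_univ_three, hb] using this
  have hi3 : i = 0 ∨ i = 1 ∨ i = 2 := by omega
  rcases hi3 with rfl | rfl | rfl
  · refine Or.inl (Or.inr ?_)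
    refine ⟨b.coord 1 p, b.coord 2 p, hnn 1, hnn 2, by rw [hzero] at hsum; linarith, ?_⟩
    rw [hzero, zero_smul, zero_add] at hrep
    exact hrep
  · refine Or.inr ?_
    rw [segment_symm]
    refine ⟨b.coord 0 p, b.coord 2 p, hnn 0, hnn 2, by rw [hzero] at hsum; linarith, ?_⟩
    rw [hzero, zero_smul, add_zero] at hrep
    exact hrep
  · refine Or.inl (Or.inl ?_)
    refine ⟨b.coord 0 p, b.coord 1 p, hnn 0, hnn 1, by rw [hzero] at hsum; linarith, ?_⟩
    rw [hzero, zero_smul, add_zero] at hrep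
    exact hrep

lemma integral_pderiv0_eq_zero (K : Set (ℝ × ℝ)) (hKc : IsCompact K) (hconv : Convex ℝ K)
    (w : MvPolynomial (Fin 2) ℝ) (hvan : ∀ p ∈ frontier K, evP w p = 0) :
    (∫ p in K, evP (MvPolynomial.pderiv 0 w) p) = 0 := by
  have hKm : MeasurableSet K := hKc.isClosed.measurableSet
  set g : ℝ × ℝ → ℝ := evP (MvPolynomial.pderiv 0 w) with hg
  have hgint : Integrable (K.indicator g) := by
    rw [integrable_indicator_iff hKm]
    exact (continuous_evP _).continuousOn.integrableOn_compact hKc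
  rw [← integral_indicator hKm]
  rw [Measure.volume_eq_prod] at hgint ⊢
  rw [integral_prod_symm _ hgint]
  have inner : ∀ y : ℝ, (∫ x : ℝ, K.indicator g (x, y)) = 0 := by
    intro y
    set S : Set ℝ := {x : ℝ | (x, y) ∈ K} with hSdef
    have hfun : (fun x => K.indicator g (x, y)) = S.indicator (fun x => g (x, y)) := by
      funext x
      by_cases hx : (x, y) ∈ K
      · rw [Set.indicator_of_mem hx, Set.indicator_of_mem (show x ∈ S from hx)]
      · rw [Set.indicator_of_notMem hx, Set.indicator_of_notMem (show x ∉ S from hx)]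
    rcases S.eq_empty_or_nonempty with hS | hS
    · rw [hfun, hS]
      simp
    · have hScomp : IsCompact S := by
        have h1 : IsCompact (K ∩ {p : ℝ × ℝ | p.2 = y}) :=
          hKc.inter_right (isClosed_eq continuous_snd continuous_const)
        have h2 : S = Prod.fst '' (K ∩ {p : ℝ × ℝ | p.2 = y}) := by
          ext x
          constructor
          · intro hx; exact ⟨(x, y), ⟨hx, rfl⟩, rfl⟩
          · rintro ⟨p, ⟨hp, hy⟩, rfl⟩
            have hpe : (p.1, y) = p := by
              apply Prod.ext
              · rfl
              · exact hy.symm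
            show (p.1, y) ∈ K
            rw [hpe]; exact hp
        rw [h2]; exact h1.image continuous_fst
      have hSconv : Convex ℝ S := by
        intro x1 h1 x2 h2 a c ha hc hac
        have hmm := hconv h1 h2 ha hc hac
        have he : a • ((x1 : ℝ), y) + c • ((x2 : ℝ), y) = (a • x1 + c • x2, y) := by
          apply Prod.ext
          · simp
          · simp only [Prod.snd_add, Prod.smul_snd, smul_eq_mul]
            linear_combination y * hac
        rw [he] at hmm
        exact hmm
      have hIcc := eq_Icc_of_connected_compact ⟨hS, hSconv.isPreconnected⟩ hScomp
      set a := sInf S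
      set bb := sSup S
      have hab : a ≤ bb := by
        have : S.Nonempty := hS
        rw [hIcc] at this
        exact Set.nonempty_Icc.1 this
      have haS : a ∈ S := by rw [hIcc]; exact Set.left_mem_Icc.2 hab
      have hbS : bb ∈ S := by rw [hIcc]; exact Set.right_mem_Icc.2 hab
      have hbf : (bb, y) ∈ frontier K := by
        rw [hKc.isClosed.frontier_eq]
        refine ⟨hbS, ?_⟩
        intro hint
        obtain ⟨ε, hε, hball⟩ := Metric.mem_nhds_iff.1 (mem_interior_iff_mem_nhds.1 hint)
        have hmem2 : ((bb + ε / 2 : ℝ), y) ∈ K := by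
          apply hball
          rw [Metric.mem_ball, Prod.dist_eq]
          apply max_lt
          · rw [Real.dist_eq]
            rw [show bb + ε / 2 - bb = ε / 2 by ring, abs_of_pos (by linarith)]
            linarith
          · rw [dist_self]; exact hε
        have : bb + ε / 2 ∈ S := hmem2
        rw [hIcc] at this
        linarith [this.2]
      have haf : (a, y) ∈ frontier K := by
        rw [hKc.isClosed.frontier_eq]
        refine ⟨haS, ?_⟩
        intro hint
        obtain ⟨ε, hε, hball⟩ := Metric.mem_nhds_iff.1 (mem_interior_iff_mem_nhds.1 hint)
        have hmem2 : ((a - ε / 2 : ℝ), y) ∈ K := by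
          apply hball
          rw [Metric.mem_ball, Prod.dist_eq]
          apply max_lt
          · rw [Real.dist_eq]
            rw [show a - ε / 2 - a = -(ε / 2) by ring, abs_neg, abs_of_pos (by linarith)]
            linarith
          · rw [dist_self]; exact hε
        have : a - ε / 2 ∈ S := hmem2
        rw [hIcc] at this
        linarith [this.1]
      rw [hfun, hIcc, integral_indicator measurableSet_Icc,
        MeasureTheory.integral_Icc_eq_integral_Ioc, ← intervalIntegral.integral_of_le hab]
      have hderiv : ∀ x ∈ Set.uIcc a bb,
          HasDerivAt (fun t => evP w (t, y)) (g (x, y)) x := fun x _ => evP_hasDerivAt_x w x y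
      have hcont : Continuous fun x : ℝ => g (x, y) :=
        (continuous_evP _).comp (continuous_id.prodMk continuous_const)
      rw [intervalIntegral.integral_eq_sub_of_hasDerivAt hderiv
        (hcont.intervalIntegrable a bb)]
      rw [hvan _ hbf, hvan _ haf, sub_zero]
  simp only [inner, integral_zero]

lemma integral_pderiv1_eq_zero (K : Set (ℝ × ℝ)) (hKc : IsCompact K) (hconv : Convex ℝ K)
    (w : MvPolynomial (Fin 2) ℝ) (hvan : ∀ p ∈ frontier K, evP w p = 0) :
    (∫ p in K, evP (MvPolynomial.pderiv 1 w) p) = 0 := by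
  have hKm : MeasurableSet K := hKc.isClosed.measurableSet
  set g : ℝ × ℝ → ℝ := evP (MvPolynomial.pderiv 1 w) with hg
  have hgint : Integrable (K.indicator g) := by
    rw [integrable_indicator_iff hKm]
    exact (continuous_evP _).continuousOn.integrableOn_compact hKc
  rw [← integral_indicator hKm]
  rw [Measure.volume_eq_prod] at hgint ⊢
  rw [integral_prod _ hgint]
  have inner : ∀ x : ℝ, (∫ t : ℝ, K.indicator g (x, t)) = 0 := by
    intro x
    set S : Set ℝ := {t : ℝ | (x, t) ∈ K} with hSdef
    have hfun : (fun t => K.indicator g (x, t)) = S.indicator (fun t => g (x, t)) := by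
      funext t
      by_cases hx : (x, t) ∈ K
      · rw [Set.indicator_of_mem hx, Set.indicator_of_mem (show t ∈ S from hx)]
      · rw [Set.indicator_of_notMem hx, Set.indicator_of_notMem (show t ∉ S from hx)]
    rcases S.eq_empty_or_nonempty with hS | hS
    · rw [hfun, hS]
      simp
    · have hScomp : IsCompact S := by
        have h1 : IsCompact (K ∩ {p : ℝ × ℝ | p.1 = x}) :=
          hKc.inter_right (isClosed_eq continuous_fst continuous_const)
        have h2 : S = Prod.snd '' (K ∩ {p : ℝ × ℝ | p.1 = x}) := by
          ext t
          constructor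
          · intro ht; exact ⟨(x, t), ⟨ht, rfl⟩, rfl⟩
          · rintro ⟨p, ⟨hp, hy⟩, rfl⟩
            have hpe : (x, p.2) = p := by
              apply Prod.ext
              · exact hy.symm
              · rfl
            show (x, p.2) ∈ K
            rw [hpe]; exact hp
        rw [h2]; exact h1.image continuous_snd
      have hSconv : Convex ℝ S := by
        intro t1 h1 t2 h2 a c ha hc hac
        have hmm := hconv h1 h2 ha hc hac
        have he : a • ((x : ℝ), t1) + c • ((x : ℝ), t2) = (x, a • t1 + c • t2) := by
          apply Prod.ext
          · simp only [Prod.fst_add, Prod.smul_fst, smul_eq_mul]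
            linear_combination x * hac
          · simp
        rw [he] at hmm
        exact hmm
      have hIcc := eq_Icc_of_connected_compact ⟨hS, hSconv.isPreconnected⟩ hScomp
      set a := sInf S
      set bb := sSup S
      have hab : a ≤ bb := by
        have : S.Nonempty := hS
        rw [hIcc] at this
        exact Set.nonempty_Icc.1 this
      have haS : a ∈ S := by rw [hIcc]; exact Set.left_mem_Icc.2 hab
      have hbS : bb ∈ S := by rw [hIcc]; exact Set.right_mem_Icc.2 hab
      have hbf : (x, bb) ∈ frontier K := by
        rw [hKc.isClosed.frontier_eq]
        refine ⟨hbS, ?_⟩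
        intro hint
        obtain ⟨ε, hε, hball⟩ := Metric.mem_nhds_iff.1 (mem_interior_iff_mem_nhds.1 hint)
        have hmem2 : ((x : ℝ), (bb + ε / 2 : ℝ)) ∈ K := by
          apply hball
          rw [Metric.mem_ball, Prod.dist_eq]
          apply max_lt
          · rw [dist_self]; exact hε
          · rw [Real.dist_eq]
            rw [show bb + ε / 2 - bb = ε / 2 by ring, abs_of_pos (by linarith)]
            linarith
        have : bb + ε / 2 ∈ S := hmem2
        rw [hIcc] at this
        linarith [this.2]
      have haf : (x, a) ∈ frontier K := by
        rw [hKc.isClosed.frontier_eq]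
        refine ⟨haS, ?_⟩
        intro hint
        obtain ⟨ε, hε, hball⟩ := Metric.mem_nhds_iff.1 (mem_interior_iff_mem_nhds.1 hint)
        have hmem2 : ((x : ℝ), (a - ε / 2 : ℝ)) ∈ K := by
          apply hball
          rw [Metric.mem_ball, Prod.dist_eq]
          apply max_lt
          · rw [dist_self]; exact hε
          · rw [Real.dist_eq]
            rw [show a - ε / 2 - a = -(ε / 2) by ring, abs_neg, abs_of_pos (by linarith)]
            linarith
        have : a - ε / 2 ∈ S := hmem2
        rw [hIcc] at this
        linarith [this.1]
      rw [hfun, hIcc, integral_indicator measurableSet_Icc,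
        MeasureTheory.integral_Icc_eq_integral_Ioc, ← intervalIntegral.integral_of_le hab]
      have hderiv : ∀ t ∈ Set.uIcc a bb,
          HasDerivAt (fun t => evP w (x, t)) (g (x, t)) t := fun t _ => evP_hasDerivAt_y w x t
      have hcont : Continuous fun t : ℝ => g (x, t) :=
        (continuous_evP _).comp (continuous_const.prodMk continuous_id)
      rw [intervalIntegral.integral_eq_sub_of_hasDerivAt hderiv
        (hcont.intervalIntegrable a bb)]
      rw [hvan _ hbf, hvan _ haf, sub_zero]
  simp only [inner, integral_zero]

/-- If v is a pair of degree-≤4 polynomials vanishing on ∂K, then div v vanishes at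
    the three vertices of K and has zero integral over K. -/
theorem stmt11 (A B C : ℝ × ℝ) (hK : AffineIndependent ℝ ![A, B, C])
    (v1 v2 : MvPolynomial (Fin 2) ℝ)
    (hd1 : v1.totalDegree ≤ 4) (hd2 : v2.totalDegree ≤ 4)
    (hbdy : ∀ p ∈ segment ℝ A B ∪ segment ℝ B C ∪ segment ℝ C A,
      evP v1 p = 0 ∧ evP v2 p = 0) :
    (∀ i : Fin 3, evP (divP (v1, v2)) (![A, B, C] i) = 0) ∧
    (∫ p in convexHull ℝ ({A, B, C} : Set (ℝ × ℝ)), evP (divP (v1, v2)) p) = 0 := by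
  have hAB : ∀ w ∈ ({v1, v2} : Set (MvPolynomial (Fin 2) ℝ)), ∀ p ∈ segment ℝ A B, evP w p = 0 := by
    rintro w (rfl | rfl) p hp
    · exact (hbdy p (Or.inl (Or.inl hp))).1
    · exact (hbdy p (Or.inl (Or.inl hp))).2
  have hBC : ∀ w ∈ ({v1, v2} : Set (MvPolynomial (Fin 2) ℝ)), ∀ p ∈ segment ℝ B C, evP w p = 0 := by
    rintro w (rfl | rfl) p hp
    · exact (hbdy p (Or.inl (Or.inr hp))).1
    · exact (hbdy p (Or.inl (Or.inr hp))).2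
  have hCA : ∀ w ∈ ({v1, v2} : Set (MvPolynomial (Fin 2) ℝ)), ∀ p ∈ segment ℝ C A, evP w p = 0 := by
    rintro w (rfl | rfl) p hp
    · exact (hbdy p (Or.inr hp)).1
    · exact (hbdy p (Or.inr hp)).2
  have hv1 : v1 ∈ ({v1, v2} : Set (MvPolynomial (Fin 2) ℝ)) := Or.inl rfl
  have hv2 : v2 ∈ ({v1, v2} : Set (MvPolynomial (Fin 2) ℝ)) := Or.inr rfl
  have hdiv : ∀ p : ℝ × ℝ,
      evP (divP (v1, v2)) p = evP (MvPolynomial.pderiv 0 v1) p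
        + evP (MvPolynomial.pderiv 1 v2) p := by
    intro p
    show evP (MvPolynomial.pderiv 0 v1 + MvPolynomial.pderiv 1 v2) p = _
    rw [evP_add]
  -- affine independence of permutations
  have hKB : AffineIndependent ℝ ![B, A, C] := by
    have heq : ![B, A, C] = ![A, B, C] ∘ ![1, 0, 2] := by
      funext i; fin_cases i <;> rfl
    rw [heq]
    exact affInd_perm A B C hK ![1, 0, 2] (by decide)
  have hKC : AffineIndependent ℝ ![C, A, B] := by
    have heq : ![C, A, B] = ![A, B, C] ∘ ![2, 0, 1] := by
      funext i; fin_cases i <;> rfl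
    rw [heq]
    exact affInd_perm A B C hK ![2, 0, 1] (by decide)
  -- gradients at vertices
  have hgradA : ∀ w ∈ ({v1, v2} : Set (MvPolynomial (Fin 2) ℝ)),
      evP (MvPolynomial.pderiv 0 w) A = 0 ∧ evP (MvPolynomial.pderiv 1 w) A = 0 := by
    intro w hw
    exact grad_zero w A B C hK (hAB w hw)
      (fun p hp => hCA w hw p (by rwa [segment_symm]))
  have hgradB : ∀ w ∈ ({v1, v2} : Set (MvPolynomial (Fin 2) ℝ)),
      evP (MvPolynomial.pderiv 0 w) B = 0 ∧ evP (MvPolynomial.pderiv 1 w) B = 0 := by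
    intro w hw
    exact grad_zero w B A C hKB
      (fun p hp => hAB w hw p (by rwa [segment_symm])) (hBC w hw)
  have hgradC : ∀ w ∈ ({v1, v2} : Set (MvPolynomial (Fin 2) ℝ)),
      evP (MvPolynomial.pderiv 0 w) C = 0 ∧ evP (MvPolynomial.pderiv 1 w) C = 0 := by
    intro w hw
    exact grad_zero w C A B hKC (hCA w hw)
      (fun p hp => hBC w hw p (by rwa [segment_symm]))
  constructor
  · intro i
    fin_cases i
    · show evP (divP (v1, v2)) A = 0
      rw [hdiv, (hgradA v1 hv1).1, (hgradA v2 hv2).2, add_zero]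
    · show evP (divP (v1, v2)) B = 0
      rw [hdiv, (hgradB v1 hv1).1, (hgradB v2 hv2).2, add_zero]
    · show evP (divP (v1, v2)) C = 0
      rw [hdiv, (hgradC v1 hv1).1, (hgradC v2 hv2).2, add_zero]
  · set K : Set (ℝ × ℝ) := convexHull ℝ ({A, B, C} : Set (ℝ × ℝ)) with hKdef
    have hKcpt : IsCompact K := by
      refine Set.Finite.isCompact_convexHull (𝕜 := ℝ) ?_
      exact (Set.finite_singleton C).insert B |>.insert A
    have hKconv : Convex ℝ K := convex_convexHull ℝ _
    have hfr := frontier_subset_segments A B C hK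
    have hvan1 : ∀ p ∈ frontier K, evP v1 p = 0 := fun p hp => (hbdy p (hfr hp)).1
    have hvan2 : ∀ p ∈ frontier K, evP v2 p = 0 := fun p hp => (hbdy p (hfr hp)).2
    have hint1 : IntegrableOn (fun p => evP (MvPolynomial.pderiv 0 v1) p) K :=
      (continuous_evP _).continuousOn.integrableOn_compact hKcpt
    have hint2 : IntegrableOn (fun p => evP (MvPolynomial.pderiv 1 v2) p) K :=
      (continuous_evP _).continuousOn.integrableOn_compact hKcpt
    calc (∫ p in K, evP (divP (v1, v2)) p)
        = ∫ p in K, (evP (MvPolynomial.pderiv 0 v1) p + evP (MvPolynomial.pderiv 1 v2) p) := by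
          simp only [hdiv]
      _ = (∫ p in K, evP (MvPolynomial.pderiv 0 v1) p)
          + ∫ p in K, evP (MvPolynomial.pderiv 1 v2) p := integral_add hint1 hint2
      _ = 0 := by
          rw [integral_pderiv0_eq_zero K hKcpt hKconv v1 hvan1,
            integral_pderiv1_eq_zero K hKcpt hKconv v2 hvan2, add_zero]
end
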